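/- For every integer n ≥ 1, the ratios of the sequence (d'_{n,k}, a'_{n,k}, b'_{n,k}, c'_{n,k}) converge as k → ∞ to the corresponding ratios of the dominant eigenvector: lim_{k→∞} a'_{n,k}/d'_{n,k} = (7n(n+2)(9n + β_n + 6))/(14n(8n² + 27n + 16)), lim_{k→∞} b'_{n,k}/d'_{n,k} = (n(21n² − 3nβ_n + 126n − 2β_n + 84))/(14n(8n² + 27n + 16)), and lim_{k→∞} c'_{n,k}/d'_{n,k} = (7n(9n + β_n + 6))/(14n(8n² + 27n + 16)). -/

import Mathlib

open Matrix Filter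

/-- The matrix `B_n` with integer entries. -/
def BmatZ (n : ℤ) : Matrix (Fin 4) (Fin 4) ℤ :=
  !![8*n^2+27*n+17, -n^2-5*n-6, -21*n^2-70*n-42, -2*n^2-6*n;
     8*n^2+19*n+6,  -n^2-4*n-3, -21*n^2-49*n-14, -2*n^2-4*n;
     8*n+6,         -n-2,       -21*n-15,        -2*n;
     8*n+3,         -n-2,       -21*n-7,         -2*n+1]

/-- `(d'_{n,k}, a'_{n,k}, b'_{n,k}, c'_{n,k})ᵀ = B_nᵏ (1, 1, 0, 0)ᵀ`. -/
def dabc' (n : ℤ) (k : ℕ) : Fin 4 → ℤ := (BmatZ n ^ k).mulVec ![1, 1, 0, 0]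

/-!
The orbit `v k = B_nᵏ v₀` satisfies `v (k + 2) = (7n² - 2) v (k + 1) - v k + c`, where `c` is a
fixed vector of `B_n`, because this holds at `k = 0` and `B_n` fixes `c`. The roots
`λ, μ = (7n² - 2 ± n β_n) / 2` of `x² - (7n² - 2) x + 1` satisfy `λ > 1 > μ > 0`, so every
coordinate is `P λᵏ + Q μᵏ + r` and the ratio of two coordinates tends to the ratio of their
`λ`-coefficients, which are read off from `v 0` and `v 1`.
-/

open Topology

theorem sub_mul_eq_of_recurrence {R : Type*} [CommRing R] {a b : R} {w : ℕ → R}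
    (hw : ∀ k, w (k + 2) = (a + b) * w (k + 1) - a * b * w k) (k : ℕ) :
    (a - b) * w k = (w 1 - b * w 0) * a ^ k - (w 1 - a * w 0) * b ^ k := by
  induction k using Nat.twoStepInduction with
  | zero => ring
  | one => ring
  | more k ih₀ ih₁ =>
    rw [hw]
    linear_combination (a + b) * ih₁ - a * b * ih₀

theorem tendsto_div_pow_of_eq {l m P Q R : ℝ} {u : ℕ → ℝ} (hl : 1 < l) (hm : |m| < l)
    (hu : ∀ k, u k = P * l ^ k + Q * m ^ k + R) :
    Tendsto (fun k ↦ u k / l ^ k) atTop (𝓝 P) := by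
  have hl₀ : 0 < l := one_pos.trans hl
  have hq : |m / l| < 1 := by rwa [abs_div, abs_of_pos hl₀, div_lt_one hl₀]
  have hr : |l⁻¹| < 1 := by rwa [abs_inv, abs_of_pos hl₀, inv_lt_one₀ hl₀]
  have h := ((tendsto_pow_atTop_nhds_zero_of_abs_lt_one hq).const_mul Q).add
    ((tendsto_pow_atTop_nhds_zero_of_abs_lt_one hr).const_mul R) |>.const_add P
  rw [mul_zero, mul_zero, add_zero, add_zero] at h
  refine h.congr fun k ↦ ?_
  have hlk : l ^ k ≠ 0 := pow_ne_zero k hl₀.ne'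
  rw [hu, div_pow, inv_pow]
  field_simp
  ring

theorem tendsto_mul_div_pow_of_recurrence {l m c r : ℝ} {u : ℕ → ℝ} (hl : 1 < l) (hm : |m| < l)
    (hr : (1 - l) * (1 - m) * r = c)
    (hu : ∀ k, u (k + 2) = (l + m) * u (k + 1) - l * m * u k + c) :
    Tendsto (fun k ↦ (l - m) * u k / l ^ k) atTop (𝓝 (u 1 - r - m * (u 0 - r))) := by
  have hw := sub_mul_eq_of_recurrence (a := l) (b := m) (w := fun k ↦ u k - r)
    fun k ↦ by rw [hu]; linear_combination -hr
  refine tendsto_div_pow_of_eq hl hm (Q := -(u 1 - r - l * (u 0 - r))) (R := (l - m) * r)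
    fun k ↦ ?_
  linear_combination hw k

theorem tendsto_div_of_recurrence {l m cu cv ru rv : ℝ} {u v : ℕ → ℝ} (hl : 1 < l)
    (hm : |m| < l) (hru : (1 - l) * (1 - m) * ru = cu) (hrv : (1 - l) * (1 - m) * rv = cv)
    (hu : ∀ k, u (k + 2) = (l + m) * u (k + 1) - l * m * u k + cu)
    (hv : ∀ k, v (k + 2) = (l + m) * v (k + 1) - l * m * v k + cv)
    (hv₀ : v 1 - rv - m * (v 0 - rv) ≠ 0) :
    Tendsto (fun k ↦ u k / v k) atTop
      (𝓝 ((u 1 - ru - m * (u 0 - ru)) / (v 1 - rv - m * (v 0 - rv)))) := by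
  refine ((tendsto_mul_div_pow_of_recurrence hl hm hru hu).div
    (tendsto_mul_div_pow_of_recurrence hl hm hrv hv) hv₀).congr fun k ↦ ?_
  have hlm : l - m ≠ 0 := sub_ne_zero.2 (lt_of_le_of_lt (le_abs_self m) hm).ne'
  have hlk : l ^ k ≠ 0 := pow_ne_zero k (one_pos.trans hl).ne'
  rw [Pi.div_apply, div_div_div_cancel_right₀ hlk, mul_div_mul_left _ _ hlm]

theorem Matrix.pow_add_two_mulVec {ι R : Type*} [Fintype ι] [DecidableEq ι] [CommRing R]
    (A : Matrix ι ι R) {s : R} {v c : ι → R} (hc : A *ᵥ c = c)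
    (h : (A ^ 2) *ᵥ v = s • (A *ᵥ v) - v + c) (k : ℕ) :
    (A ^ (k + 2)) *ᵥ v = s • ((A ^ (k + 1)) *ᵥ v) - (A ^ k) *ᵥ v + c := by
  have hck : (A ^ k) *ᵥ c = c := by
    induction k with
    | zero => simp
    | succ k ih => rw [pow_succ, ← mulVec_mulVec, hc, ih]
  rw [pow_add, ← mulVec_mulVec, h, mulVec_add, mulVec_sub, mulVec_smul, hck, mulVec_mulVec,
    ← pow_succ]

section BmatZ

variable (n : ℤ)

def fixedVec : Fin 4 → ℤ := ![30*n+24, 16*n+8, 10*n+8, 7*n+2]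

lemma BmatZ_mulVec_fixedVec : BmatZ n *ᵥ fixedVec n = fixedVec n := by
  ext i; fin_cases i <;> simp [BmatZ, fixedVec, mulVec, dotProduct, Fin.sum_univ_four] <;> ring

lemma dabc'_zero : dabc' n 0 = ![1, 1, 0, 0] := by simp [dabc']

lemma dabc'_one : dabc' n 1 = ![7*n^2+22*n+11, 7*n^2+15*n+3, 7*n+4, 7*n+1] := by
  ext i; fin_cases i <;> simp [dabc', BmatZ, mulVec, dotProduct, Fin.sum_univ_four] <;> ring

lemma dabc'_add_two (k : ℕ) :
    dabc' n (k + 2) = (7*n^2-2) • dabc' n (k + 1) - dabc' n k + fixedVec n := by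
  refine (BmatZ n).pow_add_two_mulVec (BmatZ_mulVec_fixedVec n) ?_ k
  have h1 : BmatZ n *ᵥ ![1, 1, 0, 0] = dabc' n 1 := by simp [dabc']
  rw [pow_two, ← mulVec_mulVec, h1, dabc'_one]
  ext i; fin_cases i <;> simp [BmatZ, fixedVec, mulVec, dotProduct, Fin.sum_univ_four] <;> ring

noncomputable def beta : ℝ := √(49 * (n : ℝ)^2 - 28)

noncomputable def lam : ℝ := (7 * n^2 - 2 + n * beta n) / 2

noncomputable def mu : ℝ := (7 * n^2 - 2 - n * beta n) / 2

/-- Up to scaling, the eigenvector of `B_n` for its dominant eigenvalue `lam n`. -/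
noncomputable def eigvec : Fin 4 → ℝ :=
  ![7 * (n + 2) * (7 * n^2 - 4) + beta n * (7 * n^2 + 30 * n + 20),
    (n + 2) * (7 * (7 * n^2 - 4) + beta n * (7 * n + 2)),
    2 * (2 * (7 * n^2 - 4) + beta n * (5 * n + 4)),
    7 * (7 * n^2 - 4) + beta n * (7 * n + 2)]

variable {n}

lemma one_le_intCast (hn : 0 < n) : (1 : ℝ) ≤ n := by exact_mod_cast hn

lemma beta_sq (hn : 0 < n) : beta n ^ 2 = 49 * n^2 - 28 :=
  Real.sq_sqrt (by nlinarith [one_le_intCast hn])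

lemma beta_pos (hn : 0 < n) : 0 < beta n :=
  Real.sqrt_pos.2 (by nlinarith [one_le_intCast hn])

lemma lam_add_mu : lam n + mu n = 7 * n^2 - 2 := by
  unfold lam mu; ring

lemma lam_mul_mu (hn : 0 < n) : lam n * mu n = 1 := by
  unfold lam mu; linear_combination (-(n : ℝ)^2 / 4) * beta_sq hn

lemma one_lt_lam (hn : 0 < n) : 1 < lam n := by
  have := one_le_intCast hn
  unfold lam; nlinarith [beta_pos hn]

lemma abs_mu_lt_lam (hn : 0 < n) : |mu n| < lam n := by
  have hlam := one_lt_lam hn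
  have hprod := lam_mul_mu hn
  have hmu : 0 < mu n := pos_of_mul_pos_right (hprod ▸ one_pos) (by linarith)
  rw [abs_of_pos hmu]; nlinarith

lemma eigvec_zero_pos (hn : 0 < n) : 0 < eigvec n 0 := by
  have hβ := beta_pos hn
  have hD : (0 : ℝ) < 7 * n^2 - 4 := by nlinarith [one_le_intCast hn]
  simp only [eigvec, cons_val_zero]
  positivity

lemma tendsto_dabc'_div (hn : 0 < n) (i : Fin 4) :
    Tendsto (fun k ↦ (dabc' n k i : ℝ) / dabc' n k 0) atTop (𝓝 (eigvec n i / eigvec n 0)) := by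
  have hn₁ := one_le_intCast hn
  have hD : (7 * n^2 - 4 : ℝ) ≠ 0 := by nlinarith
  have hD' : (4 - 7 * n^2 : ℝ) ≠ 0 := by nlinarith
  have hrec : ∀ j k, (dabc' n (k + 2) j : ℝ) =
      (lam n + mu n) * dabc' n (k + 1) j - lam n * mu n * dabc' n k j + fixedVec n j := by
    intro j k
    rw [lam_add_mu, lam_mul_mu hn, dabc'_add_two]
    simp only [Pi.add_apply, Pi.sub_apply, Pi.smul_apply, smul_eq_mul]
    push_cast; ring
  have hfix : ∀ j, (1 - lam n) * (1 - mu n) * ((fixedVec n j : ℝ) / (4 - 7 * n^2)) =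
      fixedVec n j := by
    intro j
    rw [show (1 - lam n) * (1 - mu n) = 4 - 7 * n^2 by
      linear_combination lam_mul_mu hn - lam_add_mu]
    exact mul_div_cancel₀ _ hD'
  have hX : ∀ j, (dabc' n 1 j - fixedVec n j / (4 - 7 * n^2) -
      mu n * (dabc' n 0 j - fixedVec n j / (4 - 7 * n^2)) : ℝ) =
      n / (2 * (7 * n^2 - 4)) * eigvec n j := by
    intro j
    fin_cases j <;> simp [dabc'_zero, dabc'_one, fixedVec, eigvec, mu] <;> field_simp <;> ring
  have hscale : (n / (2 * (7 * n^2 - 4)) : ℝ) ≠ 0 := by positivity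
  have h := tendsto_div_of_recurrence (u := fun k ↦ (dabc' n k i : ℝ))
    (v := fun k ↦ (dabc' n k 0 : ℝ)) (one_lt_lam hn) (abs_mu_lt_lam hn) (hfix i) (hfix 0)
    (hrec i) (hrec 0) (by rw [hX]; exact mul_ne_zero hscale (eigvec_zero_pos hn).ne')
  beta_reduce at h
  rwa [hX, hX, mul_div_mul_left _ _ hscale] at h

lemma eigvec_div_eigvec_zero (hn : 0 < n) :
    eigvec n 1 / eigvec n 0 =
      7 * n * (n + 2) * (9 * n + beta n + 6) / (14 * n * (8 * n^2 + 27 * n + 16)) ∧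
    eigvec n 2 / eigvec n 0 =
      n * (21 * n^2 - 3 * n * beta n + 126 * n - 2 * beta n + 84) /
        (14 * n * (8 * n^2 + 27 * n + 16)) ∧
    eigvec n 3 / eigvec n 0 =
      7 * n * (9 * n + beta n + 6) / (14 * n * (8 * n^2 + 27 * n + 16)) := by
  have hn₁ := one_le_intCast hn
  have h₀ := (eigvec_zero_pos hn).ne'
  have hden : (14 * n * (8 * n^2 + 27 * n + 16) : ℝ) ≠ 0 := by positivity
  have hβ := beta_sq hn
  refine ⟨?_, ?_, ?_⟩ <;> rw [div_eq_div_iff h₀ hden] <;> simp only [eigvec, cons_val_one, cons_val, cons_val_zero]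
  · linear_combination (-7 * n * (n + 2) * (7 * n^2 + 30 * n + 20)) * hβ
  · linear_combination (n * (3 * n + 2) * (7 * n^2 + 30 * n + 20)) * hβ
  · linear_combination (-7 * n * (7 * n^2 + 30 * n + 20)) * hβ

end BmatZ

/-- For every integer `n ≥ 1`, with `β_n = √(49n² − 28)`, the ratios
`a'_{n,k}/d'_{n,k}`, `b'_{n,k}/d'_{n,k}`, `c'_{n,k}/d'_{n,k}` converge as `k → ∞`
to the corresponding ratios of the dominant eigenvector. -/
theorem statement_15 (n : ℤ) (hn : 1 ≤ n) :
    Tendsto (fun k : ℕ => (dabc' n k 1 : ℝ) / (dabc' n k 0 : ℝ)) atTop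
      (nhds ((7*(n:ℝ)*((n:ℝ)+2)*(9*(n:ℝ) + Real.sqrt (49*(n:ℝ)^2 - 28) + 6))
        / (14*(n:ℝ)*(8*(n:ℝ)^2 + 27*(n:ℝ) + 16)))) ∧
    Tendsto (fun k : ℕ => (dabc' n k 2 : ℝ) / (dabc' n k 0 : ℝ)) atTop
      (nhds (((n:ℝ)*(21*(n:ℝ)^2 - 3*(n:ℝ)*Real.sqrt (49*(n:ℝ)^2 - 28) + 126*(n:ℝ)
            - 2*Real.sqrt (49*(n:ℝ)^2 - 28) + 84))
        / (14*(n:ℝ)*(8*(n:ℝ)^2 + 27*(n:ℝ) + 16)))) ∧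
    Tendsto (fun k : ℕ => (dabc' n k 3 : ℝ) / (dabc' n k 0 : ℝ)) atTop
      (nhds ((7*(n:ℝ)*(9*(n:ℝ) + Real.sqrt (49*(n:ℝ)^2 - 28) + 6))
        / (14*(n:ℝ)*(8*(n:ℝ)^2 + 27*(n:ℝ) + 16)))) := by
  obtain ⟨h₁, h₂, h₃⟩ := eigvec_div_eigvec_zero hn
  exact ⟨h₁ ▸ tendsto_dabc'_div hn 1, h₂ ▸ tendsto_dabc'_div hn 2, h₃ ▸ tendsto_dabc'_div hn 3⟩
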